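/- In the finite-dimensional discrete-spectrum clock setup, the time operator transforms under the clock evolution group according to U_C(s) ∘ T̂ ∘ U_C(s)⁻¹ = T̂ − s·id + ∫₀^s |t⟩⟨t| dt for every s ∈ ℝ, where the last term is the (signed, orientation-respecting) Bochner integral of the rank-one operator-valued function t ↦ |t⟩⟨t| over the interval from 0 to s. -/

import Mathlib

/-!
Conjugation by `U(s)` translates the clock states, `U(s)|t⟩ = |t + s⟩`, so `U(s) T̂ U(s)⁻¹` is the
first moment of `t ↦ |t + s⟩⟨t + s|` over `[0, t_max]`. Since every `ε_j t_max` equals `φ` modulo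
`2π`, the clock states are `t_max`-periodic up to the global phase `e^{-iφ}`, so `t ↦ |t⟩⟨t|` is
`t_max`-periodic; and since the `ε_j` are pairwise distinct, the exponentials `e^{i(ε_k - ε_j)t}`
are orthogonal on a period, so `∫₀^{t_max} |t⟩⟨t| dt = t_max · id`. Substituting `u = t + s` and
using periodicity to move the window `[s, s + t_max]` back to `[0, t_max]` produces the correction
`-s · id + ∫₀^s |t⟩⟨t| dt`.
-/

open MeasureTheory

noncomputable section

/-- The rank-one operator `|v⟩⟨w| : ψ ↦ ⟨w, ψ⟩ v` on a complex inner product space. -/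
noncomputable def ketbra {H : Type*} [NormedAddCommGroup H] [InnerProductSpace ℂ H]
    (v w : H) : H →L[ℂ] H :=
  (ContinuousLinearMap.toSpanSingleton ℂ v).comp (innerSL ℂ w)

section Ketbra

variable {H : Type*} [NormedAddCommGroup H] [InnerProductSpace ℂ H]

theorem ketbra_apply (v w ψ : H) : ketbra v w ψ = inner ℂ w ψ • v := rfl

theorem ketbra_smul_left (c : ℂ) (v w : H) : ketbra (c • v) w = c • ketbra v w := by
  ext ψ
  simp only [ketbra_apply, smul_apply, smul_comm c]

theorem ketbra_smul_right (c : ℂ) (v w : H) :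
    ketbra v (c • w) = (starRingEnd ℂ) c • ketbra v w := by
  ext ψ
  simp only [ketbra_apply, smul_apply, inner_smul_left, mul_smul]

theorem ketbra_sum_left {ι : Type*} (s : Finset ι) (v : ι → H) (w : H) :
    ketbra (∑ i ∈ s, v i) w = ∑ i ∈ s, ketbra (v i) w := by
  ext ψ
  simp [ketbra_apply, Finset.smul_sum]

theorem ketbra_sum_right {ι : Type*} (s : Finset ι) (v : H) (w : ι → H) :
    ketbra v (∑ i ∈ s, w i) = ∑ i ∈ s, ketbra v (w i) := by
  ext ψ
  simp [ketbra_apply, Finset.sum_smul]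

theorem Continuous.ketbra {X : Type*} [TopologicalSpace X] {v w : X → H}
    (hv : Continuous v) (hw : Continuous w) : Continuous fun x => ketbra (v x) (w x) :=
  (ContinuousLinearMap.toSpanSingletonCLE.continuous.comp hv).clm_comp
    ((innerSL ℂ).continuous.comp hw)

theorem comp_ketbra_comp_adjoint [CompleteSpace H] (A : H →L[ℂ] H) (v w : H) :
    A.comp ((ketbra v w).comp (ContinuousLinearMap.adjoint A)) = ketbra (A v) (A w) := by
  ext ψ
  simp only [ContinuousLinearMap.comp_apply, ketbra_apply, map_smul,
    ContinuousLinearMap.adjoint_inner_right]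

theorem star_ketbra [CompleteSpace H] (v w : H) : star (ketbra v w) = ketbra w v := by
  rw [ContinuousLinearMap.star_eq_adjoint, eq_comm, ContinuousLinearMap.eq_adjoint_iff]
  intro x y
  simp only [ketbra_apply, inner_smul_left, inner_smul_right, inner_conj_symm]
  ring

theorem OrthonormalBasis.sum_ketbra_self {ι : Type*} [Fintype ι] (b : OrthonormalBasis ι ℂ H) :
    ∑ i, ketbra (b i) (b i) = 1 := by
  ext ψ
  simpa only [sum_apply, ketbra_apply, one_apply_eq_self] using b.sum_repr' ψ

theorem OrthonormalBasis.sum_smul_ketbra_self_apply {ι : Type*} [Fintype ι] [DecidableEq ι]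
    (b : OrthonormalBasis ι ℂ H) (c : ι → ℂ) (j : ι) :
    (∑ i, c i • ketbra (b i) (b i)) (b j) = c j • b j := by
  simp [ketbra_apply, orthonormal_iff_ite.mp b.orthonormal]

end Ketbra

theorem ContinuousLinearMap.comp_intervalIntegral_comp {E : Type*} [NormedAddCommGroup E]
    [NormedSpace ℂ E] [CompleteSpace E] (A B : E →L[ℂ] E) {f : ℝ → E →L[ℂ] E} {a c : ℝ}
    (hf : IntervalIntegrable f volume a c) :
    A.comp ((∫ t in a..c, f t).comp B) = ∫ t in a..c, A.comp ((f t).comp B) :=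
  ((ContinuousLinearMap.mulLeftRight ℂ (E →L[ℂ] E) A B).intervalIntegral_comp_comm hf).symm

theorem exp_apply_of_apply_eq_smul {E : Type*} [NormedAddCommGroup E] [NormedSpace ℂ E]
    [CompleteSpace E] (A : E →L[ℂ] E) {v : E} {c : ℂ} (h : A v = c • v) :
    NormedSpace.exp A v = Complex.exp c • v := by
  have hpow (m : ℕ) : (A ^ m) v = c ^ m • v := by
    induction m with
    | zero => simp
    | succ m ih => rw [pow_succ', mul_apply_eq_comp, ih, map_smul, h, smul_smul, pow_succ]
  have hA := (NormedSpace.exp_series_hasSum_exp' (𝕂 := ℂ) A).mapL (ContinuousLinearMap.apply ℂ E v)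
  have hc := (NormedSpace.exp_series_hasSum_exp' (𝕂 := ℂ) c).smul_const v
  simp only [ContinuousLinearMap.apply_apply, smul_apply, hpow,
    smul_smul, smul_eq_mul] at hA hc
  rw [Complex.exp_eq_exp_ℂ]
  exact hA.unique hc

theorem integral_exp_mul_complex_eq_zero_of_exp_eq_one {c : ℂ} {p : ℝ} (hc : c ≠ 0)
    (hcp : Complex.exp (c * p) = 1) : ∫ t in (0 : ℝ)..p, Complex.exp (c * t) = 0 := by
  simp [integral_exp_mul_complex hc, hcp]

theorem intervalIntegral_exp_I_mul_sub_eq_zero {ι : Type*} {ε : ι → ℝ} {p φ : ℝ} {nj : ι → ℤ}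
    (hεp : ∀ j, ε j * p = 2 * Real.pi * nj j + φ)
    (hnj : Function.Injective nj) {j k : ι} (hjk : j ≠ k) :
    ∫ t in (0 : ℝ)..p, Complex.exp (Complex.I * (ε k - ε j) * t) = 0 := by
  have hε : ε k ≠ ε j := fun h => hjk <| hnj <| by
    have hmul : 2 * Real.pi * (nj j : ℝ) = 2 * Real.pi * nj k := by
      rw [← add_left_inj φ, ← hεp, ← hεp, h]
    exact_mod_cast mul_left_cancel₀ (by positivity) hmul
  refine integral_exp_mul_complex_eq_zero_of_exp_eq_one
    (mul_ne_zero Complex.I_ne_zero (sub_ne_zero.mpr (by exact_mod_cast hε))) ?_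
  have hphase :
      Complex.I * (ε k - ε j) * p = ((nj k - nj j : ℤ) : ℂ) * (2 * Real.pi * Complex.I) := by
    have hk := congrArg ((↑) : ℝ → ℂ) (hεp k)
    have hj := congrArg ((↑) : ℝ → ℂ) (hεp j)
    push_cast at hk hj ⊢
    linear_combination Complex.I * (hk - hj)
  rw [hphase, Complex.exp_int_mul_two_pi_mul_I]

section PeriodicMoment

variable {E : Type*} [NormedAddCommGroup E] [NormedSpace ℝ E] {K : ℝ → E} {p : ℝ}

theorem Function.Periodic.intervalIntegral_smul_add_period (hK : Function.Periodic K p)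
    (hc : Continuous K) (s : ℝ) :
    ∫ t in p..p + s, t • K t = (∫ t in (0 : ℝ)..s, t • K t) + p • ∫ t in (0 : ℝ)..s, K t := by
  have hshift := intervalIntegral.integral_comp_add_right (fun t => t • K t) p (a := 0) (b := s)
  rw [zero_add, add_comm s] at hshift
  simp only [show ∀ t, K (t + p) = K t from hK, add_smul] at hshift
  have htK : Continuous fun t => t • K t := continuous_id.smul hc
  rw [← hshift, intervalIntegral.integral_add (g := fun t => p • K t) (htK.intervalIntegrable _ _)
    ((hc.const_smul p).intervalIntegrable _ _), intervalIntegral.integral_smul]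

theorem Function.Periodic.intervalIntegral_smul_comp_add (hK : Function.Periodic K p)
    (hc : Continuous K) (s : ℝ) :
    ∫ t in (0 : ℝ)..p, t • K (t + s) =
      (∫ t in (0 : ℝ)..p, t • K t) - s • (∫ t in (0 : ℝ)..p, K t) + p • ∫ t in (0 : ℝ)..s, K t := by
  have htK : Continuous fun t => t • K t := continuous_id.smul hc
  have hsub (a b : ℝ) :
      ∫ t in a..b, (t - s) • K t = (∫ t in a..b, t • K t) - s • ∫ t in a..b, K t := by
    simp only [sub_smul]
    rw [intervalIntegral.integral_sub (g := fun t => s • K t) (htK.intervalIntegrable _ _)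
      ((hc.const_smul s).intervalIntegrable _ _), intervalIntegral.integral_smul]
  calc ∫ t in (0 : ℝ)..p, t • K (t + s)
      = ∫ t in s..p + s, (t - s) • K t := by
        simpa using
          intervalIntegral.integral_comp_add_right (fun t => (t - s) • K t) s (a := 0) (b := p)
    _ = (∫ t in s..p + s, t • K t) - s • ∫ t in (0 : ℝ)..p, K t := by
        rw [hsub, add_comm p s, hK.intervalIntegral_add_eq s 0, zero_add]
    _ = _ := by
        rw [← intervalIntegral.integral_add_adjacent_intervals (htK.intervalIntegrable s 0)
            (htK.intervalIntegrable 0 (p + s)),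
          ← intervalIntegral.integral_add_adjacent_intervals (htK.intervalIntegrable 0 p)
            (htK.intervalIntegrable p (p + s)),
          hK.intervalIntegral_smul_add_period hc, intervalIntegral.integral_symm 0 s]
        abel

end PeriodicMoment

section Clock

variable {H : Type*} [NormedAddCommGroup H] [InnerProductSpace ℂ H] {ι : Type*} [Fintype ι]
  (b : OrthonormalBasis ι ℂ H) (ε : ι → ℝ)

def clockHamiltonian : H →L[ℂ] H := ∑ j, (ε j : ℂ) • ketbra (b j) (b j)

def clockEvolution (u : ℝ) : H →L[ℂ] H :=
  NormedSpace.exp ((-(u : ℂ) * Complex.I) • clockHamiltonian b ε)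

def clockState (g : ι → ℝ) (t : ℝ) : H :=
  ∑ j, (Complex.exp (Complex.I * g j) * Complex.exp (-Complex.I * ε j * t)) • b j

theorem isSelfAdjoint_clockHamiltonian [CompleteSpace H] :
    IsSelfAdjoint (clockHamiltonian b ε) := by
  simp only [IsSelfAdjoint, clockHamiltonian, star_sum, star_smul, star_ketbra, Complex.star_def,
    Complex.conj_ofReal]

theorem star_clockEvolution [CompleteSpace H] (u : ℝ) :
    star (clockEvolution b ε u) = clockEvolution b ε (-u) := by
  simp only [clockEvolution, NormedSpace.star_exp, star_smul,
    (isSelfAdjoint_clockHamiltonian b ε).star_eq, Complex.star_def, map_mul, map_neg,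
    Complex.conj_ofReal, Complex.conj_I, Complex.ofReal_neg]
  congr 2
  ring

theorem clockEvolution_apply_basis [CompleteSpace H] [DecidableEq ι] (u : ℝ) (j : ι) :
    clockEvolution b ε u (b j) = Complex.exp (-(u : ℂ) * Complex.I * ε j) • b j :=
  exp_apply_of_apply_eq_smul _ <| by
    rw [smul_apply, clockHamiltonian, b.sum_smul_ketbra_self_apply, smul_smul]

theorem clockEvolution_apply_clockState [CompleteSpace H] (g : ι → ℝ) (u t : ℝ) :
    clockEvolution b ε u (clockState b ε g t) = clockState b ε g (t + u) := by
  classical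
  simp only [clockState, map_sum, map_smul, clockEvolution_apply_basis, smul_smul]
  refine Finset.sum_congr rfl fun j _ => ?_
  rw [mul_assoc, ← Complex.exp_add]
  congr 3
  push_cast
  ring

theorem clockEvolution_conj_ketbra_clockState [CompleteSpace H] (g : ι → ℝ) (s t : ℝ) :
    (clockEvolution b ε s).comp
        ((ketbra (clockState b ε g t) (clockState b ε g t)).comp (clockEvolution b ε (-s))) =
      ketbra (clockState b ε g (t + s)) (clockState b ε g (t + s)) := by
  rw [← star_clockEvolution, ContinuousLinearMap.star_eq_adjoint, comp_ketbra_comp_adjoint,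
    clockEvolution_apply_clockState]

theorem continuous_clockState (g : ι → ℝ) : Continuous (clockState b ε g) := by
  unfold clockState
  fun_prop

theorem ketbra_clockState (g : ι → ℝ) (t : ℝ) :
    ketbra (clockState b ε g t) (clockState b ε g t) = ∑ j, ∑ k,
      (Complex.exp (Complex.I * (g j - g k)) * Complex.exp (Complex.I * (ε k - ε j) * t)) •
        ketbra (b j) (b k) := by
  simp only [clockState, ketbra_sum_left, ketbra_sum_right, ketbra_smul_left, ketbra_smul_right,
    Finset.smul_sum, smul_smul, map_mul, ← Complex.exp_conj, map_neg, Complex.conj_I,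
    Complex.conj_ofReal]
  rw [Finset.sum_comm]
  refine Finset.sum_congr rfl fun j _ => Finset.sum_congr rfl fun k _ => ?_
  rw [mul_mul_mul_comm, ← Complex.exp_add, ← Complex.exp_add]
  congr 3 <;> ring

end Clock

section PeriodicClock

variable {H : Type*} [NormedAddCommGroup H] [InnerProductSpace ℂ H] {ι : Type*} [Fintype ι]
  (b : OrthonormalBasis ι ℂ H) {ε : ι → ℝ} {p φ : ℝ} {nj : ι → ℤ}

theorem clockState_add_period (hεp : ∀ j, ε j * p = 2 * Real.pi * nj j + φ) (g : ι → ℝ) (t : ℝ) :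
    clockState b ε g (t + p) = Complex.exp (-Complex.I * φ) • clockState b ε g t := by
  simp only [clockState, Finset.smul_sum, smul_smul]
  refine Finset.sum_congr rfl fun j _ => ?_
  have hphase : -Complex.I * ε j * ↑(t + p) =
      -Complex.I * φ + -Complex.I * ε j * t + ((-nj j : ℤ) : ℂ) * (2 * Real.pi * Complex.I) := by
    have := congrArg ((↑) : ℝ → ℂ) (hεp j)
    push_cast at this ⊢
    linear_combination -Complex.I * this
  rw [hphase, Complex.exp_add, Complex.exp_add, Complex.exp_int_mul_two_pi_mul_I]
  congr 1
  ring

theorem periodic_ketbra_clockState (hεp : ∀ j, ε j * p = 2 * Real.pi * nj j + φ) (g : ι → ℝ) :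
    Function.Periodic (fun t => ketbra (clockState b ε g t) (clockState b ε g t)) p := by
  intro t
  dsimp only
  rw [clockState_add_period b hεp, ketbra_smul_left, ketbra_smul_right, smul_smul,
    ← Complex.exp_conj, ← Complex.exp_add]
  simp

theorem integral_ketbra_clockState_period [CompleteSpace H]
    (hεp : ∀ j, ε j * p = 2 * Real.pi * nj j + φ) (hnj : Function.Injective nj) (g : ι → ℝ) :
    ∫ t in (0 : ℝ)..p, ketbra (clockState b ε g t) (clockState b ε g t) = p • 1 := by
  classical
  have hcont (j k : ι) : Continuous fun t : ℝ =>
      (Complex.exp (Complex.I * (g j - g k)) * Complex.exp (Complex.I * (ε k - ε j) * t)) •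
        ketbra (b j) (b k) := by
    fun_prop
  have hdiag (j k : ι) : ∫ t in (0 : ℝ)..p,
      (Complex.exp (Complex.I * (g j - g k)) * Complex.exp (Complex.I * (ε k - ε j) * t)) •
        ketbra (b j) (b k) = if j = k then (p : ℂ) • ketbra (b j) (b j) else 0 := by
    rw [intervalIntegral.integral_smul_const, intervalIntegral.integral_const_mul]
    split_ifs with hjk
    · subst hjk
      simp
    · simp [intervalIntegral_exp_I_mul_sub_eq_zero hεp hnj hjk]
  simp only [ketbra_clockState]
  rw [intervalIntegral.integral_finsetSum fun j _ =>
    (continuous_finsetSum _ fun k _ => hcont j k).intervalIntegrable _ _]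
  simp only [intervalIntegral.integral_finsetSum fun k _ => (hcont _ k).intervalIntegrable _ _,
    hdiag, Finset.sum_ite_eq, Finset.mem_univ, if_true, ← Finset.smul_sum, b.sum_ketbra_self,
    Complex.coe_smul]

end PeriodicClock

theorem time_operator_covariant_shift_general
    {H : Type*} [NormedAddCommGroup H] [InnerProductSpace ℂ H] [FiniteDimensional ℂ H]
    (n : ℕ) (b : OrthonormalBasis (Fin n) ℂ H)
    (tmax φ : ℝ) (htmax : 0 < tmax)
    (nj : Fin n → ℤ) (hnj : Function.Injective nj)
    (g : Fin n → ℝ)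
    (ε : Fin n → ℝ) (hε : ∀ j, ε j = (2 * Real.pi * (nj j : ℝ) + φ) / tmax)
    (ct : ℝ → H)
    (hct : ∀ t : ℝ, ct t = ∑ j : Fin n,
      (Complex.exp (Complex.I * (g j : ℝ)) * Complex.exp (-Complex.I * (ε j : ℝ) * t)) • b j)
    (HC : H →L[ℂ] H) (hHC : HC = ∑ j : Fin n, ((ε j : ℝ) : ℂ) • ketbra (b j) (b j))
    (U : ℝ → (H →L[ℂ] H))
    (hU : ∀ t : ℝ, U t = NormedSpace.exp ((-(t : ℂ) * Complex.I) • HC))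
    (T : H →L[ℂ] H)
    (hT : T = (1 / tmax) • ∫ t in (0:ℝ)..tmax, t • ketbra (ct t) (ct t)) :
    ∀ s : ℝ, (U s).comp (T.comp (U (-s)))
      = T - s • (1 : H →L[ℂ] H) + ∫ t in (0:ℝ)..s, ketbra (ct t) (ct t) := by
  intro s
  have hεp (j : Fin n) : ε j * tmax = 2 * Real.pi * nj j + φ := by
    rw [hε]
    field_simp
  obtain rfl : ct = clockState b ε g := funext hct
  subst hHC
  obtain rfl : U = clockEvolution b ε := funext hU
  subst hT
  have hKc : Continuous fun t => ketbra (clockState b ε g t) (clockState b ε g t) :=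
    (continuous_clockState b ε g).ketbra (continuous_clockState b ε g)
  have htKc : Continuous fun t : ℝ => t • ketbra (clockState b ε g t) (clockState b ε g t) :=
    continuous_id.smul hKc
  rw [ContinuousLinearMap.smul_comp, ContinuousLinearMap.comp_smul,
    ContinuousLinearMap.comp_intervalIntegral_comp _ _ (htKc.intervalIntegrable _ _)]
  simp only [ContinuousLinearMap.smul_comp, ContinuousLinearMap.comp_smul,
    clockEvolution_conj_ketbra_clockState]
  rw [(periodic_ketbra_clockState b hεp g).intervalIntegral_smul_comp_add hKc,
    integral_ketbra_clockState_period b hεp hnj]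
  match_scalars <;> field_simp

/-- **Covariant transformation law of the time operator.**  For the finite-dimensional
discrete-spectrum clock with Hamiltonian `HC = Σ_j ε_j |b j⟩⟨b j|`, evolution
`U t = exp(-i t HC)` (so `U (-s)` is the inverse of `U s`), covariant clock states
`|t⟩ = Σ_j e^{i g j} e^{-i ε_j t} b j`, and first-moment time operator
`T = (1/t_max) ∫₀^{t_max} t |t⟩⟨t| dt`, one has for every `s ∈ ℝ`:
`U(s) T U(s)⁻¹ = T - s·id + ∫₀^s |t⟩⟨t| dt`. -/
theorem time_operator_covariant_shift
    {H : Type*} [NormedAddCommGroup H] [InnerProductSpace ℂ H] [FiniteDimensional ℂ H]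
    (n : ℕ) (hn : 1 ≤ n) (b : OrthonormalBasis (Fin n) ℂ H)
    (tmax φ : ℝ) (htmax : 0 < tmax)
    (nj : Fin n → ℤ) (hnj : Function.Injective nj)
    (g : Fin n → ℝ)
    (ε : Fin n → ℝ) (hε : ∀ j, ε j = (2 * Real.pi * (nj j : ℝ) + φ) / tmax)
    (ct : ℝ → H)
    (hct : ∀ t : ℝ, ct t = ∑ j : Fin n,
      (Complex.exp (Complex.I * (g j : ℝ)) * Complex.exp (-Complex.I * (ε j : ℝ) * t)) • b j)
    (HC : H →L[ℂ] H) (hHC : HC = ∑ j : Fin n, ((ε j : ℝ) : ℂ) • ketbra (b j) (b j))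
    (U : ℝ → (H →L[ℂ] H))
    (hU : ∀ t : ℝ, U t = NormedSpace.exp ((-(t : ℂ) * Complex.I) • HC))
    (T : H →L[ℂ] H)
    (hT : T = (1 / tmax) • ∫ t in (0:ℝ)..tmax, t • ketbra (ct t) (ct t)) :
    ∀ s : ℝ, (U s).comp (T.comp (U (-s)))
      = T - s • (1 : H →L[ℂ] H) + ∫ t in (0:ℝ)..s, ketbra (ct t) (ct t) :=
  time_operator_covariant_shift_general n b tmax φ htmax nj hnj g ε hε ct hct HC hHC U hU T hT

end
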